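/- Let I be an instance of (3,B2)-SAT with variables x₁,…,xₙ and clauses c₁,…,c_m, where the three literals of each clause c are listed in a fixed order ℓ₁, ℓ₂, ℓ₃. Let G = (V,E) be the finite simple graph built as follows. For each clause c take eight vertices 1'_c, 2'_c, 1_c, 2_c, 3_c, 4_c, 5_c, 6_c with edges 1'_c1_c, 1_c3_c, 2'_c2_c, 2_c3_c, 3_c4_c, 4_c5_c, 5_c6_c. For each variable x take six vertices x, ¬x, 1_x, 2_x, 3_x, 4_x with edges x1_x, ¬x1_x, 1_x2_x, 2_x3_x, 3_x4_x. For each clause c with literals ℓ₁, ℓ₂, ℓ₃, add edges from 1'_c to the literal vertices of ℓ₁ and of ℓ₂, and an edge from 2'_c to the literal vertex of ℓ₃, where the literal vertex of a positive occurrence of x is x and of a negative occurrence is ¬x. Let U = {3_c4_c, 4_c5_c : clauses c} ∪ {1_x2_x, 2_x3_x : variables x}. Then I is satisfiable if and only if G has a minimal edge dominating set S with U ⊆ S. -/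

import Mathlib

/-- Vertices of the graph built from a (3,B2)-SAT instance for Ext Edge Dominating Set:
per clause `c` the vertices `1'_c, 2'_c, 1_c, 2_c, 3_c, 4_c, 5_c, 6_c`, per variable `x`
the vertices `x, ¬x, 1_x, 2_x, 3_x, 4_x`. -/
inductive V11 (n m : ℕ) : Type
  | p1 : Fin m → V11 n m   -- 1'_c
  | p2 : Fin m → V11 n m   -- 2'_c
  | c1 : Fin m → V11 n m
  | c2 : Fin m → V11 n m
  | c3 : Fin m → V11 n m
  | c4 : Fin m → V11 n m
  | c5 : Fin m → V11 n m
  | c6 : Fin m → V11 n m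
  | pos : Fin n → V11 n m  -- x
  | neg : Fin n → V11 n m  -- ¬x
  | x1 : Fin n → V11 n m
  | x2 : Fin n → V11 n m
  | x3 : Fin n → V11 n m
  | x4 : Fin n → V11 n m

/-- The literal vertex of an occurrence: `x` for positive, `¬x` for negative. -/
def litV11 (n m : ℕ) : Fin n × Bool → V11 n m
  | (v, true) => V11.pos v
  | (v, false) => V11.neg v

/-- Edges of the constructed graph. -/
def E11 (n m : ℕ) (lit : Fin m → Fin 3 → Fin n × Bool) : Set (Sym2 (V11 n m)) :=
  {e | (∃ j : Fin m,
          e = s(V11.p1 j, V11.c1 j) ∨ e = s(V11.c1 j, V11.c3 j) ∨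
          e = s(V11.p2 j, V11.c2 j) ∨ e = s(V11.c2 j, V11.c3 j) ∨
          e = s(V11.c3 j, V11.c4 j) ∨ e = s(V11.c4 j, V11.c5 j) ∨
          e = s(V11.c5 j, V11.c6 j)) ∨
       (∃ i : Fin n,
          e = s(V11.pos i, V11.x1 i) ∨ e = s(V11.neg i, V11.x1 i) ∨
          e = s(V11.x1 i, V11.x2 i) ∨ e = s(V11.x2 i, V11.x3 i) ∨
          e = s(V11.x3 i, V11.x4 i)) ∨
       (∃ j : Fin m,
          e = s(V11.p1 j, litV11 n m (lit j 0)) ∨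
          e = s(V11.p1 j, litV11 n m (lit j 1)) ∨
          e = s(V11.p2 j, litV11 n m (lit j 2)))}

/-- The pre-solution `U = {3_c4_c, 4_c5_c : clauses c} ∪ {1_x2_x, 2_x3_x : variables x}`. -/
def U11 (n m : ℕ) : Set (Sym2 (V11 n m)) :=
  {e | (∃ j : Fin m, e = s(V11.c3 j, V11.c4 j) ∨ e = s(V11.c4 j, V11.c5 j)) ∨
       (∃ i : Fin n, e = s(V11.x1 i, V11.x2 i) ∨ e = s(V11.x2 i, V11.x3 i))}

/-- `D` dominates every edge of `E`: each edge of `E` is in `D` or shares an endpoint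
with an edge of `D`. -/
def EDSDom {V : Type*} (E D : Set (Sym2 V)) : Prop :=
  ∀ e ∈ E, e ∈ D ∨ ∃ f ∈ D, ∃ v : V, v ∈ e ∧ v ∈ f

/-!
A minimal edge dominating set `D ⊇ U` has, for every `e ∈ D`, a private edge: an edge of the
graph that meets `e` and no other edge of `D`. For `e = 1_x2_x` the private edge must be
`x1_x` or `¬x1_x`, so at most one literal vertex of `x` is covered by `D`; for `e = 3_c4_c` it
must be `1_c3_c` or `2_c3_c`, so `1_c` or `2_c` is uncovered and the edge `1'_c1_c` or `2'_c2_c`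
is dominated through a literal vertex of `c`. Making the covered positive vertices true
satisfies every clause.

Conversely, a satisfying assignment picks a true literal `ℓ_k` in each clause; joining `1'_c`
or `2'_c` (whichever is adjacent to it) to `ℓ_k` and the other one to `1_c` or `2_c` completes
`U` to a dominating set in which every edge still has a private edge, hence a minimal one.
-/

section EdgeDomination

variable {V : Type*} {E D : Set (Sym2 V)} {e : Sym2 V}

theorem EDSDom.of_forall_exists_mem (h : ∀ e ∈ E, ∃ v ∈ e, ∃ f ∈ D, v ∈ f) : EDSDom E D :=
  fun e he => Or.inr <| by
    obtain ⟨v, hve, f, hf, hvf⟩ := h e he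
    exact ⟨f, hf, v, hve, hvf⟩

theorem EDSDom.exists_mem_of_forall_not_mem (hD : EDSDom E D) {a b : V} (hab : s(a, b) ∈ E)
    (hb : ∀ f ∈ D, b ∉ f) : ∃ f ∈ D, a ∈ f := by
  rcases hD _ hab with habD | ⟨f, hf, v, hv, hvf⟩
  · exact absurd (Sym2.mem_mk_right a b) (hb _ habD)
  · rcases Sym2.mem_iff.1 hv with rfl | rfl
    · exact ⟨f, hf, hvf⟩
    · exact absurd hvf (hb f hf)

def IsPrivateEdge (D : Set (Sym2 V)) (e w : Sym2 V) : Prop :=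
  ∀ v ∈ w, ∀ f ∈ D, v ∈ f → f = e

theorem IsPrivateEdge.forall_not_mem {w : Sym2 V} (hw : IsPrivateEdge D e w) {u : V}
    (hu : u ∈ w) (hue : u ∉ e) : ∀ f ∈ D, u ∉ f :=
  fun f hf huf => hue (hw u hu f hf huf ▸ huf)

theorem minimal_of_forall_exists_isPrivateEdge (h : ∀ e ∈ D, ∃ w ∈ E, IsPrivateEdge D e w) :
    ∀ D' ⊂ D, ¬ EDSDom E D' := by
  intro D' hD' hdom
  obtain ⟨e, heD, heD'⟩ := Set.exists_of_ssubset hD'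
  obtain ⟨w, hwE, hw⟩ := h e heD
  rcases hdom w hwE with hwD' | ⟨f, hf, v, hvw, hvf⟩
  · exact heD' (hw _ w.out_fst_mem w (hD'.1 hwD') w.out_fst_mem ▸ hwD')
  · exact heD' (hw v hvw f (hD'.1 hf) hvf ▸ hf)

theorem exists_isPrivateEdge_of_minimal (hdom : EDSDom E D) (hmin : ∀ D' ⊂ D, ¬ EDSDom E D')
    (he : e ∈ D) : ∃ w ∈ E, (∃ v ∈ w, v ∈ e) ∧ IsPrivateEdge D e w := by
  obtain ⟨w, hwE, hw⟩ : ∃ w ∈ E, ¬ (w ∈ D \ {e} ∨ ∃ f ∈ D \ {e}, ∃ v, v ∈ w ∧ v ∈ f) := by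
    simpa [EDSDom] using hmin _ (Set.sdiff_singleton_ssubset.2 he)
  have hpriv : IsPrivateEdge D e w := fun v hv f hf hvf =>
    by_contra fun hfe => hw (Or.inr ⟨f, ⟨hf, hfe⟩, v, hv, hvf⟩)
  refine ⟨w, hwE, ?_, hpriv⟩
  rcases hdom w hwE with hwD | ⟨f, hf, v, hvw, hvf⟩
  · have hwe : w = e := by_contra fun hwe => hw (Or.inl ⟨hwD, hwe⟩)
    exact ⟨_, w.out_fst_mem, hwe ▸ w.out_fst_mem⟩
  · exact ⟨v, hvw, hpriv v hvw f hf hvf ▸ hvf⟩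

end EdgeDomination

section Construction

variable {n m : ℕ} {lit : Fin m → Fin 3 → Fin n × Bool} {e : Sym2 (V11 n m)}

theorem litV11_eq_ite (p : Fin n × Bool) :
    litV11 n m p = if p.2 then V11.pos p.1 else V11.neg p.1 := by
  rcases p with ⟨v, _ | _⟩ <;> rfl

theorem litV11_injective : Function.Injective (litV11 n m) := by
  rintro ⟨v, _ | _⟩ ⟨w, _ | _⟩ h <;> simp_all [litV11]

theorem E11.eq_of_p1_mem (he : e ∈ E11 n m lit) {j : Fin m} (h : V11.p1 j ∈ e) :
    e = s(V11.p1 j, V11.c1 j) ∨ e = s(V11.p1 j, litV11 n m (lit j 0)) ∨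
      e = s(V11.p1 j, litV11 n m (lit j 1)) := by
  rcases he with ⟨_, h|h|h|h|h|h|h⟩ | ⟨_, h|h|h|h|h⟩ | ⟨_, h|h|h⟩ <;> subst h <;>
    simp_all [Sym2.mem_iff, litV11_eq_ite, eq_ite_iff]

theorem E11.eq_of_p2_mem (he : e ∈ E11 n m lit) {j : Fin m} (h : V11.p2 j ∈ e) :
    e = s(V11.p2 j, V11.c2 j) ∨ e = s(V11.p2 j, litV11 n m (lit j 2)) := by
  rcases he with ⟨_, h|h|h|h|h|h|h⟩ | ⟨_, h|h|h|h|h⟩ | ⟨_, h|h|h⟩ <;> subst h <;>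
    simp_all [Sym2.mem_iff, litV11_eq_ite, eq_ite_iff]

theorem E11.eq_of_c3_mem (he : e ∈ E11 n m lit) {j : Fin m} (h : V11.c3 j ∈ e) :
    e = s(V11.c1 j, V11.c3 j) ∨ e = s(V11.c2 j, V11.c3 j) ∨ e = s(V11.c3 j, V11.c4 j) := by
  rcases he with ⟨_, h|h|h|h|h|h|h⟩ | ⟨_, h|h|h|h|h⟩ | ⟨_, h|h|h⟩ <;> subst h <;>
    simp_all [Sym2.mem_iff, litV11_eq_ite, eq_ite_iff]

theorem E11.eq_of_x1_mem (he : e ∈ E11 n m lit) {i : Fin n} (h : V11.x1 i ∈ e) :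
    e = s(V11.pos i, V11.x1 i) ∨ e = s(V11.neg i, V11.x1 i) ∨ e = s(V11.x1 i, V11.x2 i) := by
  rcases he with ⟨_, h|h|h|h|h|h|h⟩ | ⟨_, h|h|h|h|h⟩ | ⟨_, h|h|h⟩ <;> subst h <;>
    simp_all [Sym2.mem_iff, litV11_eq_ite, eq_ite_iff]

theorem litV11_x1_mem_E11 (p : Fin n × Bool) : s(litV11 n m p, V11.x1 p.1) ∈ E11 n m lit := by
  rcases p with ⟨i, _ | _⟩ <;> exact Or.inr (Or.inl ⟨i, by simp [litV11]⟩)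

end Construction

section Backward

variable {n m : ℕ} {lit : Fin m → Fin 3 → Fin n × Bool} {D : Set (Sym2 (V11 n m))}

theorem forall_not_pos_mem_or_forall_not_neg_mem (hU : U11 n m ⊆ D)
    (hdom : EDSDom (E11 n m lit) D) (hmin : ∀ D' ⊂ D, ¬ EDSDom (E11 n m lit) D') (i : Fin n) :
    (∀ f ∈ D, V11.pos i ∉ f) ∨ (∀ f ∈ D, V11.neg i ∉ f) := by
  obtain ⟨w, hwE, ⟨v, hvw, hve⟩, hw⟩ :=
    exists_isPrivateEdge_of_minimal hdom hmin (hU (Or.inr ⟨i, Or.inl rfl⟩) : s(V11.x1 i, V11.x2 i) ∈ D)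
  have hx2 : V11.x2 i ∉ w := fun h => by
    simpa [Sym2.eq_iff] using hw _ h _ (hU (Or.inr ⟨i, Or.inr rfl⟩)) (Sym2.mem_mk_left _ _)
  rcases Sym2.mem_iff.1 hve with rfl | rfl
  · rcases E11.eq_of_x1_mem hwE hvw with rfl | rfl | rfl
    · exact Or.inl (hw.forall_not_mem (Sym2.mem_mk_left _ _) (by simp))
    · exact Or.inr (hw.forall_not_mem (Sym2.mem_mk_left _ _) (by simp))
    · exact absurd (Sym2.mem_mk_right _ _) hx2
  · exact absurd hvw hx2

theorem exists_literal_mem (hE : D ⊆ E11 n m lit) (hU : U11 n m ⊆ D)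
    (hdom : EDSDom (E11 n m lit) D) (hmin : ∀ D' ⊂ D, ¬ EDSDom (E11 n m lit) D') (j : Fin m) :
    ∃ k : Fin 3, ∃ f ∈ D, litV11 n m (lit j k) ∈ f := by
  obtain ⟨w, hwE, ⟨v, hvw, hve⟩, hw⟩ :=
    exists_isPrivateEdge_of_minimal hdom hmin (hU (Or.inl ⟨j, Or.inl rfl⟩) : s(V11.c3 j, V11.c4 j) ∈ D)
  have hc4 : V11.c4 j ∉ w := fun h => by
    simpa [Sym2.eq_iff] using hw _ h _ (hU (Or.inl ⟨j, Or.inr rfl⟩)) (Sym2.mem_mk_left _ _)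
  rcases Sym2.mem_iff.1 hve with rfl | rfl
  · rcases E11.eq_of_c3_mem hwE hvw with rfl | rfl | rfl
    · have hc1 := hw.forall_not_mem (Sym2.mem_mk_left _ _) (by simp)
      obtain ⟨f, hf, hp1f⟩ := hdom.exists_mem_of_forall_not_mem (Or.inl ⟨j, by tauto⟩) hc1
      rcases E11.eq_of_p1_mem (hE hf) hp1f with rfl | rfl | rfl
      · exact absurd (Sym2.mem_mk_right _ _) (hc1 _ hf)
      · exact ⟨0, _, hf, Sym2.mem_mk_right _ _⟩
      · exact ⟨1, _, hf, Sym2.mem_mk_right _ _⟩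
    · have hc2 := hw.forall_not_mem (Sym2.mem_mk_left _ _) (by simp)
      obtain ⟨f, hf, hp2f⟩ := hdom.exists_mem_of_forall_not_mem (Or.inl ⟨j, by tauto⟩) hc2
      rcases E11.eq_of_p2_mem (hE hf) hp2f with rfl | rfl
      · exact absurd (Sym2.mem_mk_right _ _) (hc2 _ hf)
      · exact ⟨2, _, hf, Sym2.mem_mk_right _ _⟩
    · exact absurd (Sym2.mem_mk_right _ _) hc4
  · exact absurd hvw hc4

theorem satisfiable_of_minimal_eds (hE : D ⊆ E11 n m lit) (hU : U11 n m ⊆ D)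
    (hdom : EDSDom (E11 n m lit) D) (hmin : ∀ D' ⊂ D, ¬ EDSDom (E11 n m lit) D') :
    ∃ T : Fin n → Bool, ∀ j : Fin m, ∃ k : Fin 3, T (lit j k).1 = (lit j k).2 := by
  classical
  refine ⟨fun i => decide (∃ f ∈ D, V11.pos i ∈ f), fun j => ?_⟩
  obtain ⟨k, f, hf, hlf⟩ := exists_literal_mem hE hU hdom hmin j
  refine ⟨k, ?_⟩
  rcases h : lit j k with ⟨i, _ | _⟩ <;> simp only [h, litV11] at hlf ⊢
  · simpa using (forall_not_pos_mem_or_forall_not_neg_mem hU hdom hmin i).resolve_right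
      fun hneg => hneg f hf hlf
  · exact decide_eq_true ⟨f, hf, hlf⟩

end Backward

section Forward

variable {n m : ℕ} (lit : Fin m → Fin 3 → Fin n × Bool) (k : Fin m → Fin 3)

def p1Edge (j : Fin m) : Sym2 (V11 n m) :=
  if k j = 2 then s(V11.p1 j, V11.c1 j) else s(V11.p1 j, litV11 n m (lit j (k j)))

def p2Edge (j : Fin m) : Sym2 (V11 n m) :=
  if k j = 2 then s(V11.p2 j, litV11 n m (lit j (k j))) else s(V11.p2 j, V11.c2 j)

/-- The edge dominating set obtained when `lit j (k j)` is a true literal of each clause `j`. -/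
def witnessEDS : Set (Sym2 (V11 n m)) :=
  U11 n m ∪ Set.range (p1Edge lit k) ∪ Set.range (p2Edge lit k)

variable {lit k} {f : Sym2 (V11 n m)} {j : Fin m} {i : Fin n}

theorem eq_two_of_c1_mem_p1Edge (h : V11.c1 j ∈ p1Edge lit k j) : k j = 2 := by
  by_contra hj
  simp only [p1Edge, hj, if_false, litV11_eq_ite] at h
  split_ifs at h <;> simp at h

theorem ne_two_of_c2_mem_p2Edge (h : V11.c2 j ∈ p2Edge lit k j) : k j ≠ 2 := by
  intro hj
  simp only [p2Edge, hj, if_true, litV11_eq_ite] at h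
  split_ifs at h <;> simp at h

namespace witnessEDS

theorem U11_subset : U11 n m ⊆ witnessEDS lit k := fun _ h => Or.inl (Or.inl h)

theorem p1Edge_mem (j : Fin m) : p1Edge lit k j ∈ witnessEDS lit k := Or.inl (Or.inr ⟨j, rfl⟩)

theorem p2Edge_mem (j : Fin m) : p2Edge lit k j ∈ witnessEDS lit k := Or.inr ⟨j, rfl⟩

theorem subset_E11 : witnessEDS lit k ⊆ E11 n m lit := by
  rintro f (((⟨j, rfl | rfl⟩ | ⟨i, rfl | rfl⟩) | ⟨j, rfl⟩) | ⟨j, rfl⟩)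
  · exact Or.inl ⟨j, by tauto⟩
  · exact Or.inl ⟨j, by tauto⟩
  · exact Or.inr (Or.inl ⟨i, by tauto⟩)
  · exact Or.inr (Or.inl ⟨i, by tauto⟩)
  · unfold p1Edge
    split_ifs with h
    · exact Or.inl ⟨j, by tauto⟩
    · refine Or.inr (Or.inr ⟨j, ?_⟩)
      generalize k j = c at h
      fin_cases c <;> simp_all
  · unfold p2Edge
    split_ifs with h
    · rw [h]
      exact Or.inr (Or.inr ⟨j, by tauto⟩)
    · exact Or.inl ⟨j, by tauto⟩

theorem edsDom : EDSDom (E11 n m lit) (witnessEDS lit k) := by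
  refine EDSDom.of_forall_exists_mem fun e he => ?_
  have hU {f : Sym2 (V11 n m)} (hf : f ∈ U11 n m) {v : V11 n m} (hv : v ∈ f) :
      ∃ f ∈ witnessEDS lit k, v ∈ f :=
    ⟨f, U11_subset hf, hv⟩
  have hp1 (j : Fin m) : ∃ f ∈ witnessEDS lit k, V11.p1 j ∈ f :=
    ⟨_, p1Edge_mem j, by unfold p1Edge; split_ifs <;> simp⟩
  have hp2 (j : Fin m) : ∃ f ∈ witnessEDS lit k, V11.p2 j ∈ f :=
    ⟨_, p2Edge_mem j, by unfold p2Edge; split_ifs <;> simp⟩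
  have hc3 (j : Fin m) := hU (Or.inl ⟨j, Or.inl rfl⟩) (Sym2.mem_mk_left (V11.c3 j) (V11.c4 j))
  have hc5 (j : Fin m) := hU (Or.inl ⟨j, Or.inr rfl⟩) (Sym2.mem_mk_right (V11.c4 j) (V11.c5 j))
  have hx1 (i : Fin n) := hU (Or.inr ⟨i, Or.inl rfl⟩) (Sym2.mem_mk_left (V11.x1 i) (V11.x2 i))
  have hx3 (i : Fin n) := hU (Or.inr ⟨i, Or.inr rfl⟩) (Sym2.mem_mk_right (V11.x2 i) (V11.x3 i))
  -- every edge has an endpoint among `1'_c, 2'_c, 3_c, 5_c, 1_x, 3_x`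
  rcases he with ⟨j, rfl|rfl|rfl|rfl|rfl|rfl|rfl⟩ | ⟨i, rfl|rfl|rfl|rfl|rfl⟩ | ⟨j, rfl|rfl|rfl⟩ <;>
    simp [hp1, hp2, hc3, hc5, hx1, hx3]

theorem eq_p1Edge_of_p1_mem (hf : f ∈ witnessEDS lit k) (h : V11.p1 j ∈ f) :
    f = p1Edge lit k j := by
  rcases hf with (((⟨_, rfl | rfl⟩ | ⟨_, rfl | rfl⟩) | ⟨_, rfl⟩) | ⟨_, rfl⟩) <;>
    simp only [p1Edge, p2Edge, Sym2.mem_iff] at h ⊢ <;> (try split_ifs at h ⊢) <;>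
    simp_all [Sym2.mem_iff, litV11_eq_ite, eq_ite_iff]

theorem eq_p1Edge_of_c1_mem (hf : f ∈ witnessEDS lit k) (h : V11.c1 j ∈ f) :
    f = p1Edge lit k j := by
  rcases hf with (((⟨_, rfl | rfl⟩ | ⟨_, rfl | rfl⟩) | ⟨_, rfl⟩) | ⟨_, rfl⟩) <;>
    simp only [p1Edge, p2Edge, Sym2.mem_iff] at h ⊢ <;> (try split_ifs at h ⊢) <;>
    simp_all [Sym2.mem_iff, litV11_eq_ite, eq_ite_iff]

theorem eq_p2Edge_of_p2_mem (hf : f ∈ witnessEDS lit k) (h : V11.p2 j ∈ f) :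
    f = p2Edge lit k j := by
  rcases hf with (((⟨_, rfl | rfl⟩ | ⟨_, rfl | rfl⟩) | ⟨_, rfl⟩) | ⟨_, rfl⟩) <;>
    simp only [p1Edge, p2Edge, Sym2.mem_iff] at h ⊢ <;> (try split_ifs at h ⊢) <;>
    simp_all [Sym2.mem_iff, litV11_eq_ite, eq_ite_iff]

theorem eq_p2Edge_of_c2_mem (hf : f ∈ witnessEDS lit k) (h : V11.c2 j ∈ f) :
    f = p2Edge lit k j := by
  rcases hf with (((⟨_, rfl | rfl⟩ | ⟨_, rfl | rfl⟩) | ⟨_, rfl⟩) | ⟨_, rfl⟩) <;>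
    simp only [p1Edge, p2Edge, Sym2.mem_iff] at h ⊢ <;> (try split_ifs at h ⊢) <;>
    simp_all [Sym2.mem_iff, litV11_eq_ite, eq_ite_iff]

theorem eq_of_c3_mem (hf : f ∈ witnessEDS lit k) (h : V11.c3 j ∈ f) :
    f = s(V11.c3 j, V11.c4 j) := by
  rcases hf with (((⟨_, rfl | rfl⟩ | ⟨_, rfl | rfl⟩) | ⟨_, rfl⟩) | ⟨_, rfl⟩) <;>
    simp only [p1Edge, p2Edge, Sym2.mem_iff] at h ⊢ <;> (try split_ifs at h ⊢) <;>
    simp_all [Sym2.mem_iff, litV11_eq_ite, eq_ite_iff]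

theorem eq_of_c5_mem (hf : f ∈ witnessEDS lit k) (h : V11.c5 j ∈ f) :
    f = s(V11.c4 j, V11.c5 j) := by
  rcases hf with (((⟨_, rfl | rfl⟩ | ⟨_, rfl | rfl⟩) | ⟨_, rfl⟩) | ⟨_, rfl⟩) <;>
    simp only [p1Edge, p2Edge, Sym2.mem_iff] at h ⊢ <;> (try split_ifs at h ⊢) <;>
    simp_all [Sym2.mem_iff, litV11_eq_ite, eq_ite_iff]

theorem c6_not_mem (hf : f ∈ witnessEDS lit k) (h : V11.c6 j ∈ f) :
    False := by
  rcases hf with (((⟨_, rfl | rfl⟩ | ⟨_, rfl | rfl⟩) | ⟨_, rfl⟩) | ⟨_, rfl⟩) <;>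
    simp only [p1Edge, p2Edge, Sym2.mem_iff] at h ⊢ <;> (try split_ifs at h ⊢) <;>
    simp_all [Sym2.mem_iff, litV11_eq_ite, eq_ite_iff]

theorem eq_of_x1_mem (hf : f ∈ witnessEDS lit k) (h : V11.x1 i ∈ f) :
    f = s(V11.x1 i, V11.x2 i) := by
  rcases hf with (((⟨_, rfl | rfl⟩ | ⟨_, rfl | rfl⟩) | ⟨_, rfl⟩) | ⟨_, rfl⟩) <;>
    simp only [p1Edge, p2Edge, Sym2.mem_iff] at h ⊢ <;> (try split_ifs at h ⊢) <;>
    simp_all [Sym2.mem_iff, litV11_eq_ite, eq_ite_iff]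

theorem eq_of_x3_mem (hf : f ∈ witnessEDS lit k) (h : V11.x3 i ∈ f) :
    f = s(V11.x2 i, V11.x3 i) := by
  rcases hf with (((⟨_, rfl | rfl⟩ | ⟨_, rfl | rfl⟩) | ⟨_, rfl⟩) | ⟨_, rfl⟩) <;>
    simp only [p1Edge, p2Edge, Sym2.mem_iff] at h ⊢ <;> (try split_ifs at h ⊢) <;>
    simp_all [Sym2.mem_iff, litV11_eq_ite, eq_ite_iff]

theorem x4_not_mem (hf : f ∈ witnessEDS lit k) (h : V11.x4 i ∈ f) :
    False := by
  rcases hf with (((⟨_, rfl | rfl⟩ | ⟨_, rfl | rfl⟩) | ⟨_, rfl⟩) | ⟨_, rfl⟩) <;>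
    simp only [p1Edge, p2Edge, Sym2.mem_iff] at h ⊢ <;> (try split_ifs at h ⊢) <;>
    simp_all [Sym2.mem_iff, litV11_eq_ite, eq_ite_iff]

theorem eq_of_litV11_mem {T : Fin n → Bool} (hk : ∀ j, T (lit j (k j)).1 = (lit j (k j)).2)
    (hf : f ∈ witnessEDS lit k) {p : Fin n × Bool} (h : litV11 n m p ∈ f) : T p.1 = p.2 := by
  rcases hf with (((⟨_, rfl | rfl⟩ | ⟨_, rfl | rfl⟩) | ⟨_, rfl⟩) | ⟨_, rfl⟩) <;>
    (try simp only [p1Edge, p2Edge] at h) <;> (try split_ifs at h) <;>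
    rcases Sym2.mem_iff.1 h with h | h <;>
    first
      | exact (litV11_injective h).symm ▸ hk _
      | (revert h; obtain ⟨_, _ | _⟩ := p <;> simp [litV11])

theorem minimal {T : Fin n → Bool} (hk : ∀ j, T (lit j (k j)).1 = (lit j (k j)).2) :
    ∀ D' ⊂ witnessEDS lit k, ¬ EDSDom (E11 n m lit) D' := by
  refine minimal_of_forall_exists_isPrivateEdge fun e he => ?_
  rcases he with (((⟨j, rfl | rfl⟩ | ⟨i, rfl | rfl⟩) | ⟨j, rfl⟩) | ⟨j, rfl⟩)
  · by_cases hj : k j = 2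
    · refine ⟨s(V11.c2 j, V11.c3 j), Or.inl ⟨j, by tauto⟩, Sym2.forall_mem_pair.2 ⟨?_, ?_⟩⟩
      · intro f hf h
        exact absurd hj (ne_two_of_c2_mem_p2Edge (eq_p2Edge_of_c2_mem hf h ▸ h))
      · exact fun _ => eq_of_c3_mem
    · refine ⟨s(V11.c1 j, V11.c3 j), Or.inl ⟨j, by tauto⟩, Sym2.forall_mem_pair.2 ⟨?_, ?_⟩⟩
      · intro f hf h
        exact absurd (eq_two_of_c1_mem_p1Edge (eq_p1Edge_of_c1_mem hf h ▸ h)) hj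
      · exact fun _ => eq_of_c3_mem
  · exact ⟨s(V11.c5 j, V11.c6 j), Or.inl ⟨j, by tauto⟩, Sym2.forall_mem_pair.2
      ⟨fun _ => eq_of_c5_mem, fun f hf h => (c6_not_mem hf h).elim⟩⟩
  · refine ⟨s(litV11 n m (i, !T i), V11.x1 i), litV11_x1_mem_E11 _, Sym2.forall_mem_pair.2
      ⟨fun f hf h => ?_, fun _ => eq_of_x1_mem⟩⟩
    simpa using eq_of_litV11_mem hk hf h
  · exact ⟨s(V11.x3 i, V11.x4 i), Or.inr (Or.inl ⟨i, by tauto⟩), Sym2.forall_mem_pair.2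
      ⟨fun _ => eq_of_x3_mem, fun f hf h => (x4_not_mem hf h).elim⟩⟩
  · exact ⟨s(V11.p1 j, V11.c1 j), Or.inl ⟨j, by tauto⟩, Sym2.forall_mem_pair.2
      ⟨fun _ => eq_p1Edge_of_p1_mem, fun _ => eq_p1Edge_of_c1_mem⟩⟩
  · exact ⟨s(V11.p2 j, V11.c2 j), Or.inl ⟨j, by tauto⟩, Sym2.forall_mem_pair.2
      ⟨fun _ => eq_p2Edge_of_p2_mem, fun _ => eq_p2Edge_of_c2_mem⟩⟩

end witnessEDS

end Forward

theorem stmt_11_general (n m : ℕ) (lit : Fin m → Fin 3 → Fin n × Bool) :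
    (∃ T : Fin n → Bool, ∀ j : Fin m, ∃ k : Fin 3, T (lit j k).1 = (lit j k).2) ↔
      (∃ D : Set (Sym2 (V11 n m)), D ⊆ E11 n m lit ∧ U11 n m ⊆ D ∧
        EDSDom (E11 n m lit) D ∧
        ∀ D' : Set (Sym2 (V11 n m)), D' ⊂ D → ¬ EDSDom (E11 n m lit) D') := by
  constructor
  · rintro ⟨T, hT⟩
    choose k hk using hT
    exact ⟨witnessEDS lit k, witnessEDS.subset_E11, witnessEDS.U11_subset, witnessEDS.edsDom,
      witnessEDS.minimal hk⟩
  · rintro ⟨D, hE, hU, hdom, hmin⟩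
    exact satisfiable_of_minimal_eds hE hU hdom hmin

/-- a (3,B2)-SAT instance is satisfiable iff the constructed graph has a
minimal edge dominating set containing `U`. -/
theorem stmt_11 (n m : ℕ) (lit : Fin m → Fin 3 → Fin n × Bool)
    (hdist : ∀ j : Fin m, Function.Injective fun k : Fin 3 => (lit j k).1)
    (hpos : ∀ v : Fin n,
      (Finset.univ.filter fun p : Fin m × Fin 3 => lit p.1 p.2 = (v, true)).card = 2)
    (hneg : ∀ v : Fin n,
      (Finset.univ.filter fun p : Fin m × Fin 3 => lit p.1 p.2 = (v, false)).card = 2) :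
    (∃ T : Fin n → Bool, ∀ j : Fin m, ∃ k : Fin 3, T (lit j k).1 = (lit j k).2) ↔
      (∃ D : Set (Sym2 (V11 n m)), D ⊆ E11 n m lit ∧ U11 n m ⊆ D ∧
        EDSDom (E11 n m lit) D ∧
        ∀ D' : Set (Sym2 (V11 n m)), D' ⊂ D → ¬ EDSDom (E11 n m lit) D') :=
  stmt_11_general n m lit
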